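/- Let K be a field of characteristic zero and let f be a nonzero element of K[[u_1,...,u_r]]. Then there exist natural numbers s_1,...,s_{r−1} such that, after the monomial change of variables v_1 := u_1/u_2^{s_1}, v_2 := u_2/u_3^{s_2}, ..., v_{r−1} := u_{r−1}/u_r^{s_{r−1}}, v_r := u_r, one can write f(u_1,...,u_r) = v^α · g(v_1,...,v_r) where α ∈ ℕ^r and g is a unit of K[[v_1,...,v_r]] (monomialization lemma). -/

import Mathlib

/-!
Take all `s_i` equal to one `S` exceeding every entry of `n₀`, where `n₀` is the
lexicographically least exponent in the support of `f`. The exponent map `E_s(n)` obeys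
`E_{j+1} = s_j E_j + n_{j+1}`, so it is injective, and the bound on `S` makes it send
`n₀ ≤_lex n` to `E_s(n₀) ≤ E_s(n)` coordinatewise. Hence every monomial of `f`, written in `v`,
is divisible by `v^{E_s(n₀)}`, and the quotient has constant term `f_{n₀} ≠ 0`.
-/

/-- The exponent of `v_j` in the monomial `u^n` after the toric change of variables
`u_k = v_k · v_{k+1}^{s_k} · v_{k+2}^{s_k s_{k+1}} ⋯ v_r^{s_k ⋯ s_{r-1}}`
(inverting `v_k = u_k / u_{k+1}^{s_k}`, `v_r = u_r`). -/
noncomputable def toricExp {r : ℕ} (s : Fin r → ℕ) (n : Fin r →₀ ℕ) : Fin r →₀ ℕ :=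
  Finsupp.equivFunOnFinite.symm fun j : Fin r =>
    ∑ k ∈ Finset.univ.filter (fun k : Fin r => k ≤ j),
      n k * ∏ t ∈ Finset.univ.filter (fun t : Fin r => k ≤ t ∧ t < j), s t

section ToricExp

variable {r : ℕ} (s : Fin r → ℕ)

theorem toricExp_apply (n : Fin r →₀ ℕ) (j : Fin r) :
    toricExp s n j = ∑ k ∈ Finset.Iic j, n k * ∏ t ∈ Finset.Ico k j, s t := by
  simp only [toricExp, Finsupp.coe_equivFunOnFinite_symm]
  congr 1
  · ext k; simp
  · ext k
    congr 2
    ext t; simp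

theorem toricExp_congr {n n' : Fin r →₀ ℕ} {j : Fin r} (h : ∀ k ≤ j, n k = n' k) :
    toricExp s n j = toricExp s n' j := by
  simp only [toricExp_apply]
  exact Finset.sum_congr rfl fun k hk => by rw [h k (Finset.mem_Iic.mp hk)]

theorem toricExp_of_val_eq_zero (n : Fin r →₀ ℕ) {j : Fin r} (hj : j.val = 0) :
    toricExp s n j = n j := by
  have hIic : Finset.Iic j = {j} := by
    refine Finset.ext fun k => ?_
    simp only [Finset.mem_Iic, Finset.mem_singleton, Fin.le_def, Fin.ext_iff]; omega
  simp [toricExp_apply, hIic]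

theorem toricExp_of_val_eq_succ (n : Fin r →₀ ℕ) {j k : Fin r} (hjk : k.val = j.val + 1) :
    toricExp s n k = s j * toricExp s n j + n k := by
  have hIic : Finset.Iic k = insert k (Finset.Iic j) := by
    refine Finset.ext fun t => ?_
    simp only [Finset.mem_Iic, Finset.mem_insert, Fin.le_def, Fin.ext_iff]; omega
  have hIco : ∀ t ≤ j, Finset.Ico t k = insert j (Finset.Ico t j) := by
    intro t ht
    refine Finset.ext fun u => ?_
    simp only [Finset.mem_Ico, Finset.mem_insert, Fin.le_def, Fin.lt_def, Fin.ext_iff] at ht ⊢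
    omega
  have hk : k ∉ Finset.Iic j := by simp only [Finset.mem_Iic, Fin.le_def]; omega
  rw [toricExp_apply, toricExp_apply, hIic, Finset.sum_insert hk, Finset.mul_sum,
    Finset.Ico_self, Finset.prod_empty, mul_one, add_comm]
  congr 1
  refine Finset.sum_congr rfl fun t ht => ?_
  rw [hIco t (Finset.mem_Iic.mp ht), Finset.prod_insert (by simp)]
  ring

theorem toricExp_injective : Function.Injective (toricExp s) := by
  intro n n' h
  ext k
  rcases hk : k.val with _ | j
  · rw [← toricExp_of_val_eq_zero s n hk, ← toricExp_of_val_eq_zero s n' hk, h]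
  · have hj : j < r := by omega
    have hstep := toricExp_of_val_eq_succ s n (j := ⟨j, hj⟩) hk
    rw [h, toricExp_of_val_eq_succ s n' (j := ⟨j, hj⟩) hk] at hstep
    omega

/-- Past the first index `i` where `n₀` and `n` differ, the gap `E(n)_j - E(n₀)_j ≥ 1` survives
each Horner step `E_{j+1} = s_j E_j + n_{j+1}` because `n₀_{j+1} < s_j`. -/
theorem toricExp_lt_toricExp {n₀ n : Fin r →₀ ℕ} {i : Fin r}
    (hs : ∀ j k : Fin r, k.val = j.val + 1 → n₀ k < s j)
    (hpre : ∀ k < i, n₀ k = n k) (hi : n₀ i < n i) {j : Fin r} (hij : i ≤ j) :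
    toricExp s n₀ j < toricExp s n j := by
  obtain ⟨v, hv, hjv⟩ : ∃ v, i.val ≤ v ∧ j.val = v := ⟨j.val, hij, rfl⟩
  induction v, hv using Nat.le_induction generalizing j with
  | base =>
    obtain rfl : j = i := Fin.ext hjv
    rcases hj : j.val with _ | p
    · rwa [toricExp_of_val_eq_zero s n₀ hj, toricExp_of_val_eq_zero s n hj]
    · have hp : p < r := by omega
      have hprefix : toricExp s n₀ ⟨p, hp⟩ = toricExp s n ⟨p, hp⟩ :=
        toricExp_congr s fun k hk => hpre k (lt_of_le_of_lt hk (by simp [Fin.lt_def, hj]))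
      rw [toricExp_of_val_eq_succ s n₀ (j := ⟨p, hp⟩) hj,
        toricExp_of_val_eq_succ s n (j := ⟨p, hp⟩) hj, hprefix]
      omega
  | succ v hiv ih =>
    have hv : v < r := by omega
    have hlt := ih (j := ⟨v, hv⟩) (Fin.le_def.mpr hiv) rfl
    rw [toricExp_of_val_eq_succ s n₀ (j := ⟨v, hv⟩) hjv,
      toricExp_of_val_eq_succ s n (j := ⟨v, hv⟩) hjv]
    have := hs ⟨v, hv⟩ j hjv
    nlinarith

theorem toricExp_le_toricExp_of_toLex_le {n₀ n : Fin r →₀ ℕ}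
    (hs : ∀ j k : Fin r, k.val = j.val + 1 → n₀ k < s j) (h : toLex n₀ ≤ toLex n) :
    toricExp s n₀ ≤ toricExp s n := by
  rcases h.eq_or_lt with h | h
  · rw [toLex.injective h]
  obtain ⟨i, hpre, hi⟩ := Finsupp.lex_def.mp h
  intro j
  rcases lt_or_ge j i with hji | hij
  · exact (toricExp_congr s fun k hk => hpre k (lt_of_le_of_lt hk hji)).le
  · exact (toricExp_lt_toricExp s hs hpre hi hij).le

end ToricExp

namespace MvPowerSeries

variable {σ R : Type*} [CommSemiring R]

theorem monomial_one_dvd_of_coeff_ne_zero {φ : MvPowerSeries σ R} {α : σ →₀ ℕ}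
    (h : ∀ m, coeff m φ ≠ 0 → α ≤ m) : monomial α 1 ∣ φ := by
  let ψ : MvPowerSeries σ R := fun m => coeff (m + α) φ
  refine ⟨ψ, ext fun m => ?_⟩
  rw [coeff_monomial_mul]
  split_ifs with hα
  · rw [one_mul]
    exact congrArg (coeff · φ) (tsub_add_cancel_of_le hα).symm
  · exact not_not.mp fun hm => hα (h m hm)

theorem constantCoeff_eq_coeff_monomial_one_mul (ψ : MvPowerSeries σ R) (α : σ →₀ ℕ) :
    constantCoeff ψ = coeff α (monomial α 1 * ψ) := by
  rw [coeff_monomial_mul, if_pos le_rfl, one_mul, tsub_self, coeff_zero_eq_constantCoeff]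

end MvPowerSeries

open MvPowerSeries

theorem monomialization_general (K : Type*) [Field K] (r : ℕ)
    (f : MvPowerSeries (Fin r) K) (hf : f ≠ 0) :
    ∃ (s : Fin r → ℕ) (α : Fin r →₀ ℕ) (g : MvPowerSeries (Fin r) K),
      IsUnit g ∧
      (∀ n : Fin r →₀ ℕ,
        MvPowerSeries.coeff (R := K) (toricExp s n) ((MvPowerSeries.monomial (R := K) α 1) * g)
          = MvPowerSeries.coeff (R := K) n f) ∧
      (∀ m : Fin r →₀ ℕ, (¬ ∃ n : Fin r →₀ ℕ, toricExp s n = m) →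
        MvPowerSeries.coeff (R := K) m ((MvPowerSeries.monomial (R := K) α 1) * g) = 0) := by
  obtain ⟨n₀, hn₀⟩ := exists_finsupp_eq_lexOrder_of_ne_zero hf
  set s : Fin r → ℕ := fun _ => n₀.degree + 1
  have hs : ∀ j k : Fin r, k.val = j.val + 1 → n₀ k < s j :=
    fun _ k _ => Nat.lt_succ_of_le (n₀.le_degree k)
  -- `f` rewritten in the variables `v`: the coefficient of `u^n` moves to `v^{E_s(n)}`.
  set φ : MvPowerSeries (Fin r) K := Function.extend (toricExp s) (fun n => coeff n f) 0
  have hφ : ∀ n, coeff (toricExp s n) φ = coeff n f :=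
    (toricExp_injective s).extend_apply _ _
  have hφ_out : ∀ m, (¬ ∃ n, toricExp s n = m) → coeff m φ = 0 :=
    Function.extend_apply' _ _
  have hsupp : ∀ m, coeff m φ ≠ 0 → toricExp s n₀ ≤ m := by
    intro m hm
    by_cases hmE : ∃ n, toricExp s n = m
    · obtain ⟨n, rfl⟩ := hmE
      rw [hφ] at hm
      exact toricExp_le_toricExp_of_toLex_le s hs
        (WithTop.coe_le_coe.mp (hn₀ ▸ lexOrder_le_of_coeff_ne_zero hm))
    · exact absurd (hφ_out m hmE) hm
  obtain ⟨g, hg⟩ := monomial_one_dvd_of_coeff_ne_zero hsupp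
  refine ⟨s, toricExp s n₀, g, ?_, fun n => hg ▸ hφ n, fun m hm => hg ▸ hφ_out m hm⟩
  rw [isUnit_iff_constantCoeff, constantCoeff_eq_coeff_monomial_one_mul _ (toricExp s n₀), ← hg,
    hφ, isUnit_iff_ne_zero]
  exact coeff_ne_zero_of_lexOrder hn₀.symm

/-- **Monomialization lemma.**
Let `K` be a field of characteristic zero and `f ∈ K[[u₁,…,u_r]]` nonzero.  Then there
are natural numbers `s₁,…,s_{r-1}` such that, after the monomial change of variables
`v₁ := u₁/u₂^{s₁}, …, v_{r-1} := u_{r-1}/u_r^{s_{r-1}}, v_r := u_r`, one can write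
`f(u₁,…,u_r) = v^α·g(v₁,…,v_r)` with `α ∈ ℕ^r` and `g` a unit of `K[[v₁,…,v_r]]`.
Coefficientwise: the coefficient of `v^{E_s(n)}` in `v^α·g` is the coefficient of `u^n`
in `f`, and coefficients of `v^α·g` outside the image of `E_s` vanish, where
`E_s(n)` is the exponent of `v` in `u^n`. -/
theorem monomialization (K : Type*) [Field K] [CharZero K] (r : ℕ)
    (f : MvPowerSeries (Fin r) K) (hf : f ≠ 0) :
    ∃ (s : Fin r → ℕ) (α : Fin r →₀ ℕ) (g : MvPowerSeries (Fin r) K),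
      IsUnit g ∧
      (∀ n : Fin r →₀ ℕ,
        MvPowerSeries.coeff (R := K) (toricExp s n) ((MvPowerSeries.monomial (R := K) α 1) * g)
          = MvPowerSeries.coeff (R := K) n f) ∧
      (∀ m : Fin r →₀ ℕ, (¬ ∃ n : Fin r →₀ ℕ, toricExp s n = m) →
        MvPowerSeries.coeff (R := K) m ((MvPowerSeries.monomial (R := K) α 1) * g) = 0) :=
  monomialization_general K r f hf
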